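/- Let Σ₁ = (A₁,B₁,C₁,D₁; X₁,U,Y) and Σ₂ = (A₂,B₂,C₂,D₂; X₂,U,Y) be controllable systems on complex Hilbert spaces with D₁ = D₂ and C₁∘A₁ⁿ∘B₁ = C₂∘A₂ⁿ∘B₂ for all n ≥ 0, and suppose that for every n ≥ 0 and all u₀,…,uₙ ∈ U: ‖∑_{k=0}^{n} A₁ᵏ(B₁ uₖ)‖ = ‖∑_{k=0}^{n} A₂ᵏ(B₂ uₖ)‖. Then Σ₁ and Σ₂ are unitarily similar: there exists a unitary operator V : X₁ → X₂ with V∘A₁ = A₂∘V, V∘B₁ = B₂ and C₁ = C₂∘V. -/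

import Mathlib

/-!
STATEMENT 12: Two controllable realizations of the same transfer function whose
state energies coincide are unitarily similar.
-/

noncomputable section

open ContinuousLinearMap

variable {X₁ X₂ U Y : Type*}
  [NormedAddCommGroup X₁] [InnerProductSpace ℂ X₁] [CompleteSpace X₁]
  [NormedAddCommGroup X₂] [InnerProductSpace ℂ X₂] [CompleteSpace X₂]
  [NormedAddCommGroup U] [InnerProductSpace ℂ U] [CompleteSpace U]
  [NormedAddCommGroup Y] [InnerProductSpace ℂ Y] [CompleteSpace Y]

/-- The controllable subspace `X^c` of the system. -/
def contSub {W : Type*} [NormedAddCommGroup W] [InnerProductSpace ℂ W] [CompleteSpace W]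
    (A : W →L[ℂ] W) (B : U →L[ℂ] W) : Submodule ℂ W :=
  (Submodule.span ℂ (⋃ n : ℕ, Set.range fun u : U => (A ^ n) (B u))).topologicalClosure


/-!
By the energy identity the maps `u ↦ ∑ₖ Aᵢᵏ (Bᵢ uₖ)` on finitely supported input sequences have
equal norms, so `∑ₖ A₁ᵏ B₁ uₖ ↦ ∑ₖ A₂ᵏ B₂ uₖ` is a well-defined isometry between the reachable
subspaces. Both are dense by controllability, so it extends to a unitary `V : X₁ → X₂`. The
identities `V A₁ = A₂ V` and `C₁ = C₂ V` hold on the vectors `A₁ⁿ B₁ u` (the second by equality of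
the moments), hence everywhere by continuity.
-/

section Reach

variable {R E X : Type*} [Semiring R] [AddCommMonoid E] [Module R E] [TopologicalSpace E]
  [AddCommMonoid X] [Module R X] [TopologicalSpace X] (A : X →L[R] X) (B : E →L[R] X)

def reachMap : (ℕ →₀ E) →ₗ[R] X :=
  Finsupp.lsum ℕ fun k => ((A ^ k).comp B : E →ₗ[R] X)

theorem reachMap_single (n : ℕ) (u : E) : reachMap A B (Finsupp.single n u) = (A ^ n) (B u) :=
  Finsupp.lsum_single ..

theorem reachMap_eq_sum_fin {v : ℕ →₀ E} {n : ℕ} (hv : v.support ⊆ Finset.range (n + 1)) :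
    reachMap A B v = ∑ k : Fin (n + 1), (A ^ (k : ℕ)) (B (v k)) := by
  rw [Fin.sum_univ_eq_sum_range (fun k => (A ^ k) (B (v k))), reachMap, Finsupp.lsum_apply]
  exact Finsupp.sum_of_support_subset v hv _ (by simp)

theorem span_reachable_le_range_reachMap :
    Submodule.span R (⋃ n : ℕ, Set.range fun u : E => (A ^ n) (B u)) ≤
      LinearMap.range (reachMap A B) := by
  refine Submodule.span_le.2 (Set.iUnion_subset fun n => ?_)
  rintro _ ⟨u, rfl⟩
  exact ⟨Finsupp.single n u, reachMap_single A B n u⟩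

end Reach

section Controllable

variable {E W : Type*} [NormedAddCommGroup E] [InnerProductSpace ℂ E]
  [NormedAddCommGroup W] [InnerProductSpace ℂ W] [CompleteSpace W] {A : W →L[ℂ] W} {B : E →L[ℂ] W}

theorem dense_span_reachable (hc : contSub A B = ⊤) :
    Dense (Submodule.span ℂ (⋃ n : ℕ, Set.range fun u : E => (A ^ n) (B u)) : Set W) :=
  Submodule.dense_iff_topologicalClosure_eq_top.2 hc

theorem denseRange_reachMap (hc : contSub A B = ⊤) : DenseRange (reachMap A B) :=
  (dense_span_reachable hc).mono (span_reachable_le_range_reachMap A B)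

theorem ContinuousLinearMap.ext_of_contSub_eq_top {F : Type*} [TopologicalSpace F]
    [AddCommMonoid F] [Module ℂ F] [T2Space F] {f g : W →L[ℂ] F} (hc : contSub A B = ⊤)
    (h : ∀ n u, f ((A ^ n) (B u)) = g ((A ^ n) (B u))) : f = g := by
  refine ContinuousLinearMap.ext_on (dense_span_reachable hc) ?_
  rintro _ ⟨_, ⟨n, rfl⟩, u, rfl⟩
  exact h n u

end Controllable

theorem norm_reachMap_eq_of_norm_sum_eq {R X₁ X₂ E : Type*} [Semiring R]
    [SeminormedAddCommGroup X₁] [Module R X₁] [SeminormedAddCommGroup X₂] [Module R X₂]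
    [AddCommMonoid E] [Module R E] [TopologicalSpace E] {A₁ : X₁ →L[R] X₁} {B₁ : E →L[R] X₁}
    {A₂ : X₂ →L[R] X₂} {B₂ : E →L[R] X₂}
    (hE : ∀ (n : ℕ) (u : Fin (n + 1) → E),
      ‖∑ k : Fin (n + 1), (A₁ ^ (k : ℕ)) (B₁ (u k))‖
        = ‖∑ k : Fin (n + 1), (A₂ ^ (k : ℕ)) (B₂ (u k))‖) (v : ℕ →₀ E) :
    ‖reachMap A₁ B₁ v‖ = ‖reachMap A₂ B₂ v‖ := by
  obtain ⟨n, hn⟩ := Finset.exists_nat_subset_range v.support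
  have hv : v.support ⊆ Finset.range (n + 1) :=
    hn.trans (Finset.range_subset_range.2 n.le_succ)
  rw [reachMap_eq_sum_fin A₁ B₁ hv, reachMap_eq_sum_fin A₂ B₂ hv]
  exact hE n _

theorem statement12_general
    (A₁ : X₁ →L[ℂ] X₁) (B₁ : U →L[ℂ] X₁) (C₁ : X₁ →L[ℂ] Y)
    (A₂ : X₂ →L[ℂ] X₂) (B₂ : U →L[ℂ] X₂) (C₂ : X₂ →L[ℂ] Y)
    (hc₁ : contSub A₁ B₁ = ⊤) (hc₂ : contSub A₂ B₂ = ⊤)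
    (hmom : ∀ n : ℕ, C₁.comp ((A₁ ^ n).comp B₁) = C₂.comp ((A₂ ^ n).comp B₂))
    (hE : ∀ (n : ℕ) (u : Fin (n + 1) → U),
      ‖∑ k : Fin (n + 1), (A₁ ^ (k : ℕ)) (B₁ (u k))‖
        = ‖∑ k : Fin (n + 1), (A₂ ^ (k : ℕ)) (B₂ (u k))‖) :
    ∃ V : X₁ ≃ₗᵢ[ℂ] X₂,
      (∀ x : X₁, V (A₁ x) = A₂ (V x)) ∧ (∀ u : U, V (B₁ u) = B₂ u)
        ∧ (∀ x : X₁, C₁ x = C₂ (V x)) := by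
  -- The identity of input sequences, transported along the two dense maps `reachMap`.
  let V : X₁ ≃ₗᵢ[ℂ] X₂ := (LinearEquiv.refl ℂ (ℕ →₀ U)).extendOfIsometry (reachMap A₁ B₁)
    (reachMap A₂ B₂) (denseRange_reachMap hc₁) (denseRange_reachMap hc₂)
    fun v => (norm_reachMap_eq_of_norm_sum_eq hE v).symm
  let T : X₁ →L[ℂ] X₂ := V.toContinuousLinearEquiv
  have hV : ∀ v, V (reachMap A₁ B₁ v) = reachMap A₂ B₂ v :=
    LinearEquiv.extendOfIsometry_eq _ _ _ _ _ _
  have hT : ∀ n u, T ((A₁ ^ n) (B₁ u)) = (A₂ ^ n) (B₂ u) := fun n u => by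
    rw [← reachMap_single, ← reachMap_single]
    exact hV _
  have hTA : T.comp A₁ = A₂.comp T :=
    ContinuousLinearMap.ext_of_contSub_eq_top hc₁ fun n u => by
      have h := hT (n + 1) u
      rw [pow_succ', mul_apply_eq_comp, pow_succ', mul_apply_eq_comp] at h
      rw [ContinuousLinearMap.comp_apply, ContinuousLinearMap.comp_apply, hT, h]
  have hTC : C₁ = C₂.comp T :=
    ContinuousLinearMap.ext_of_contSub_eq_top hc₁ fun n u => by
      rw [ContinuousLinearMap.comp_apply, hT]
      exact congr($(hmom n) u)
  exact ⟨V, fun x => congr($hTA x), fun u => hT 0 u, fun x => congr($hTC x)⟩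

theorem statement12
    (A₁ : X₁ →L[ℂ] X₁) (B₁ : U →L[ℂ] X₁) (C₁ : X₁ →L[ℂ] Y) (D₁ : U →L[ℂ] Y)
    (A₂ : X₂ →L[ℂ] X₂) (B₂ : U →L[ℂ] X₂) (C₂ : X₂ →L[ℂ] Y) (D₂ : U →L[ℂ] Y)
    (hc₁ : contSub A₁ B₁ = ⊤) (hc₂ : contSub A₂ B₂ = ⊤)
    (hD : D₁ = D₂)
    (hmom : ∀ n : ℕ, C₁.comp ((A₁ ^ n).comp B₁) = C₂.comp ((A₂ ^ n).comp B₂))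
    (hE : ∀ (n : ℕ) (u : Fin (n + 1) → U),
      ‖∑ k : Fin (n + 1), (A₁ ^ (k : ℕ)) (B₁ (u k))‖
        = ‖∑ k : Fin (n + 1), (A₂ ^ (k : ℕ)) (B₂ (u k))‖) :
    ∃ V : X₁ ≃ₗᵢ[ℂ] X₂,
      (∀ x : X₁, V (A₁ x) = A₂ (V x)) ∧ (∀ u : U, V (B₁ u) = B₂ u)
        ∧ (∀ x : X₁, C₁ x = C₂ (V x)) :=
  statement12_general A₁ B₁ C₁ A₂ B₂ C₂ hc₁ hc₂ hmom hE

end
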